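/- Gamma-convergence, lower bound: let N_j → ∞, Z_α^{(j)} > 0, Z^{(j)} = Σ_α Z_α^{(j)} → ∞, N_j/Z^{(j)} → λ ∈ (0,∞), and Z_α^{(j)}/Z^{(j)} → z_α. If μ_j, μ are nonnegative finite Radon measures on ℝ³∖Ω with μ_j ⇀* μ, then I_λ(μ) ≤ liminf_{j→∞} I^{(j)}(μ_j), where I^{(j)} is the rescaled discrete energy associated with (N_j, Z^{(j)}) and I_λ(μ) = I(μ) if μ(ℝ³∖Ω) ≤ λ and +∞ otherwise. -/

import Mathlib

open MeasureTheory Filter Topology Metric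
open scoped ENNReal NNReal Classical

noncomputable section

abbrev E3 : Type := EuclideanSpace ℝ (Fin 3)

/-- The molecular potential `v(x) = -∑_α Z_α / |x - R_α|`. -/
def molPot (M : ℕ) (R : Fin M → E3) (Zc : Fin M → ℝ) (x : E3) : ℝ :=
  ∑ α, -(Zc α) / dist x (R α)

/-- The particle energy `V_{N,Z}`. -/
def partEnergy (N M : ℕ) (R : Fin M → E3) (Zc : Fin M → ℝ) (x : Fin N → E3) : ℝ :=
  (∑ i, molPot M R Zc (x i)) + ∑ i, ∑ j, if i < j then (dist (x i) (x j))⁻¹ else 0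

/-- The admissible set `A_N`. -/
def adm (N M : ℕ) (R : Fin M → E3) (d : ℝ) : Set (Fin N → E3) :=
  {x | ∀ i α, d ≤ dist (x i) (R α)}

/-- `ℝ³ \ Ω`, the complement of the union of the open hard-core balls. -/
def hardCoreComp (M : ℕ) (R : Fin M → E3) (d : ℝ) : Set E3 :=
  {x | ∀ α, d ≤ dist x (R α)}

/-- `∫∫ 1/|x-y| dν dμ`. -/
def coulombPair (μ ν : Measure E3) : ℝ≥0∞ :=
  ∫⁻ x, ∫⁻ y, ENNReal.ofReal (dist x y)⁻¹ ∂ν ∂μ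

/-- Coulomb self energy `J(μ)`. -/
def selfEnergy (μ : Measure E3) : ℝ≥0∞ := (1 / 2) * coulombPair μ μ

/-- Electron-nuclei attraction term `∫ ∑_α z_α/|x - R_α| dμ`. -/
def attraction (M : ℕ) (R : Fin M → E3) (z : Fin M → ℝ) (μ : Measure E3) : ℝ :=
  ∫ x, ∑ α, z α / dist x (R α) ∂μ

/-- Continuum energy `I(μ)`, with values in `ℝ ∪ {+∞} ⊆ EReal`. -/
def contEnergy (M : ℕ) (R : Fin M → E3) (z : Fin M → ℝ) (μ : Measure E3) : EReal :=
  (selfEnergy μ : EReal) - ((attraction M R z μ : ℝ) : EReal)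

/-- `M_{[0,λ]}`: nonnegative measures supported on ℝ³∖Ω of mass at most λ. -/
def MemMle (M : ℕ) (R : Fin M → E3) (d lam : ℝ) (μ : Measure E3) : Prop :=
  μ (hardCoreComp M R d)ᶜ = 0 ∧ μ Set.univ ≤ ENNReal.ofReal lam

/-- `M_λ`: nonnegative measures supported on ℝ³∖Ω of mass exactly λ. -/
def MemMeq (M : ℕ) (R : Fin M → E3) (d lam : ℝ) (μ : Measure E3) : Prop :=
  μ (hardCoreComp M R d)ᶜ = 0 ∧ μ Set.univ = ENNReal.ofReal lam

/-- Off-diagonal Coulomb repulsion `(1/2)∫∫_{≠} 1/|x-y| dμ dμ`. -/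
def offDiagEnergy (μ : Measure E3) : ℝ≥0∞ :=
  (1 / 2) * ∫⁻ x, ∫⁻ y, (if x = y then 0 else ENNReal.ofReal (dist x y)⁻¹) ∂μ ∂μ

/-- The empirical measure `(1/Z) ∑ δ_{x_i}`. -/
def empirical (Z : ℝ) (N : ℕ) (x : Fin N → E3) : Measure E3 :=
  (ENNReal.ofReal Z)⁻¹ • ∑ i, Measure.dirac (x i)

/-- Rescaled discrete energy `I^{N,Z}(μ)`. -/
def discEnergy (M N : ℕ) (R : Fin M → E3) (Zc : Fin M → ℝ) (d : ℝ)
    (μ : Measure E3) : EReal :=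
  if ∃ x : Fin N → E3, Function.Injective x ∧ (∀ i, x i ∈ hardCoreComp M R d) ∧
      μ = empirical (∑ α, Zc α) N x
  then (offDiagEnergy μ : EReal)
    - ((attraction M R (fun α => Zc α / ∑ β, Zc β) μ : ℝ) : EReal)
  else ⊤

/-- Weak* convergence of measures, tested against continuous functions vanishing at infinity. -/
def weakStarTendsto (μs : ℕ → Measure E3) (μ : Measure E3) : Prop :=
  ∀ f : ZeroAtInftyContinuousMap E3 ℝ,
    Tendsto (fun j => ∫ x, f x ∂(μs j)) atTop (𝓝 (∫ x, f x ∂μ))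


/-! If `μ` has mass above `λ`, some cutoff function already sees mass above `λ` in `μ_j` for large
`j`, which an empirical measure of mass `N_j / Z_j → λ` cannot have; then `μ_j` is eventually not
empirical and the liminf is `+∞`.

Otherwise test the Coulomb energy against the kernels `cutoffCoulomb n`: they are continuous,
compactly supported and increase to `|x - y|⁻¹` off the diagonal. Against such a kernel the double
integral passes to the weak* limit along measures of bounded mass (the inner integrals converge
uniformly, being equicontinuous in `x`), and on an empirical measure it exceeds twice the
off-diagonal energy by at most `(n + 1) N_j / Z_j²`, which tends to `0`. The attraction passes to
the limit because the nuclear potentials, cut off inside the hard core, vanish at infinity.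
Letting `n → ∞` recovers `I(μ)` by monotone convergence. -/

section Cutoff

variable {E : Type*} [NormedAddCommGroup E]

def cutoff (m : ℕ) (x : E) : ℝ := min 1 (max 0 ((m : ℝ) - ‖x‖))

lemma continuous_cutoff (m : ℕ) : Continuous (cutoff (E := E) m) := by
  unfold cutoff; fun_prop

lemma cutoff_nonneg (m : ℕ) (x : E) : 0 ≤ cutoff m x := le_min zero_le_one (le_max_left _ _)

lemma cutoff_le_one (m : ℕ) (x : E) : cutoff m x ≤ 1 := min_le_left _ _

lemma monotone_cutoff (x : E) : Monotone fun m : ℕ => cutoff m x := fun a b hab => by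
  have : (a : ℝ) ≤ b := by exact_mod_cast hab
  exact min_le_min le_rfl (max_le_max le_rfl (by linarith))

lemma cutoff_eq_one {m : ℕ} {x : E} (h : ‖x‖ + 1 ≤ m) : cutoff m x = 1 := by
  unfold cutoff
  rw [max_eq_right (by linarith [norm_nonneg x]), min_eq_left (by linarith)]

lemma cutoff_eq_zero {m : ℕ} {x : E} (h : x ∉ closedBall (0 : E) m) : cutoff m x = 0 := by
  rw [mem_closedBall, dist_zero_right, not_le] at h
  simp [cutoff, max_eq_left (sub_nonpos.2 h.le)]

lemma support_cutoff_subset (m : ℕ) : Function.support (cutoff (E := E) m) ⊆ closedBall 0 m :=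
  fun _ hx => by_contra fun h => hx (cutoff_eq_zero h)

lemma hasCompactSupport_cutoff [ProperSpace E] (m : ℕ) : HasCompactSupport (cutoff (E := E) m) :=
  .of_support_subset_isCompact (isCompact_closedBall 0 m) (support_cutoff_subset m)

lemma iSup_ofReal_cutoff (x : E) : ⨆ m : ℕ, ENNReal.ofReal (cutoff m x) = 1 := by
  refine le_antisymm (iSup_le fun m => ENNReal.ofReal_le_one.2 (cutoff_le_one m x)) ?_
  obtain ⟨m, hm⟩ := exists_nat_ge (‖x‖ + 1)
  exact le_iSup_of_le m (by rw [cutoff_eq_one hm, ENNReal.ofReal_one])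

end Cutoff

section Kernel

variable {E : Type*} [NormedAddCommGroup E]

/-- `min (n + 1) |x - y|⁻¹`, written so as to be continuous across the diagonal. -/
def truncCoulomb (n : ℕ) (x y : E) : ℝ := (max ((n : ℝ) + 1)⁻¹ (dist x y))⁻¹

lemma truncCoulomb_den_pos (n : ℕ) (x y : E) : 0 < max ((n : ℝ) + 1)⁻¹ (dist x y) :=
  lt_max_of_lt_left (by positivity)

lemma truncCoulomb_nonneg (n : ℕ) (x y : E) : 0 ≤ truncCoulomb n x y :=
  (inv_pos.2 (truncCoulomb_den_pos n x y)).le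

lemma truncCoulomb_le (n : ℕ) (x y : E) : truncCoulomb n x y ≤ n + 1 :=
  inv_le_of_inv_le₀ (by positivity) (le_max_left _ _)

lemma truncCoulomb_le_inv_dist {n : ℕ} {x y : E} (hxy : x ≠ y) :
    truncCoulomb n x y ≤ (dist x y)⁻¹ :=
  inv_anti₀ (dist_pos.2 hxy) (le_max_right _ _)

lemma continuous_truncCoulomb (n : ℕ) : Continuous (Function.uncurry (truncCoulomb (E := E) n)) :=
  (continuous_const.max continuous_dist).inv₀ fun p => (truncCoulomb_den_pos n p.1 p.2).ne'

lemma monotone_truncCoulomb (x y : E) : Monotone fun n : ℕ => truncCoulomb n x y :=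
  fun a b hab => inv_anti₀ (truncCoulomb_den_pos b x y) <| max_le_max_right _ <|
    inv_anti₀ (by positivity) (by gcongr)

def cutoffCoulomb (n : ℕ) (x y : E) : ℝ := truncCoulomb n x y * (cutoff n x * cutoff n y)

lemma cutoffCoulomb_nonneg (n : ℕ) (x y : E) : 0 ≤ cutoffCoulomb n x y :=
  mul_nonneg (truncCoulomb_nonneg n x y) (mul_nonneg (cutoff_nonneg n x) (cutoff_nonneg n y))

lemma cutoffCoulomb_le_truncCoulomb (n : ℕ) (x y : E) : cutoffCoulomb n x y ≤ truncCoulomb n x y :=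
  mul_le_of_le_one_right (truncCoulomb_nonneg n x y)
    (mul_le_one₀ (cutoff_le_one n x) (cutoff_nonneg n y) (cutoff_le_one n y))

lemma continuous_cutoffCoulomb (n : ℕ) : Continuous (Function.uncurry (cutoffCoulomb (E := E) n)) :=
  (continuous_truncCoulomb n).mul
    (((continuous_cutoff n).comp continuous_fst).mul ((continuous_cutoff n).comp continuous_snd))

lemma support_cutoffCoulomb_subset (n : ℕ) :
    Function.support (Function.uncurry (cutoffCoulomb (E := E) n)) ⊆
      closedBall 0 n ×ˢ closedBall 0 n := by
  intro p hp
  refine ⟨by_contra fun h => hp ?_, by_contra fun h => hp ?_⟩ <;>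
    simp [Function.uncurry, cutoffCoulomb, cutoff_eq_zero h]

lemma hasCompactSupport_cutoffCoulomb [ProperSpace E] (n : ℕ) :
    HasCompactSupport (Function.uncurry (cutoffCoulomb (E := E) n)) :=
  .of_support_subset_isCompact ((isCompact_closedBall 0 n).prod (isCompact_closedBall 0 n))
    (support_cutoffCoulomb_subset n)

lemma monotone_cutoffCoulomb (x y : E) : Monotone fun n : ℕ => cutoffCoulomb n x y :=
  fun _ _ hab => mul_le_mul (monotone_truncCoulomb x y hab)
    (mul_le_mul (monotone_cutoff x hab) (monotone_cutoff y hab) (cutoff_nonneg _ _)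
      (cutoff_nonneg _ _))
    (mul_nonneg (cutoff_nonneg _ _) (cutoff_nonneg _ _)) (truncCoulomb_nonneg _ x y)

lemma ofReal_cutoffCoulomb_le (n : ℕ) (x y : E) :
    ENNReal.ofReal (cutoffCoulomb n x y) ≤
      ENNReal.ofReal (dist x y)⁻¹ + Set.indicator {x} (fun _ => (n : ℝ≥0∞) + 1) y := by
  by_cases hxy : x = y
  · subst hxy
    refine le_add_left ?_
    rw [Set.indicator_of_mem (Set.mem_singleton x)]
    calc ENNReal.ofReal (cutoffCoulomb n x x) ≤ ENNReal.ofReal (n + 1) :=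
          ENNReal.ofReal_le_ofReal ((cutoffCoulomb_le_truncCoulomb n x x).trans
            (truncCoulomb_le n x x))
      _ = n + 1 := by rw [ENNReal.ofReal_add (by positivity) zero_le_one]; simp
  · exact le_add_right (ENNReal.ofReal_le_ofReal
      ((cutoffCoulomb_le_truncCoulomb n x y).trans (truncCoulomb_le_inv_dist hxy)))

lemma ofReal_inv_dist_le_iSup_cutoffCoulomb (x y : E) :
    ENNReal.ofReal (dist x y)⁻¹ ≤ ⨆ n : ℕ, ENNReal.ofReal (cutoffCoulomb n x y) := by
  rcases eq_or_ne x y with rfl | hxy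
  · simp
  obtain ⟨n, hn⟩ := exists_nat_ge (max (max (‖x‖ + 1) (‖y‖ + 1)) (dist x y)⁻¹)
  obtain ⟨⟨hxn, hyn⟩, hdn⟩ := by simpa only [max_le_iff] using hn
  have hdist : ((n : ℝ) + 1)⁻¹ ≤ dist x y := inv_le_of_inv_le₀ (dist_pos.2 hxy) (by linarith)
  refine le_iSup_of_le n (le_of_eq ?_)
  rw [cutoffCoulomb, truncCoulomb, max_eq_right hdist, cutoff_eq_one hxn, cutoff_eq_one hyn,
    mul_one, mul_one]

end Kernel

lemma EquicontinuousOn.tendstoUniformlyOn_of_tendsto {ι X α : Type*} [TopologicalSpace X]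
    [UniformSpace α] {F : ι → X → α} {f : X → α} {p : Filter ι} {K : Set X} (hK : IsCompact K)
    (hF : EquicontinuousOn F K) (h : ∀ x ∈ K, Tendsto (F · x) p (𝓝 (f x))) :
    TendstoUniformlyOn F f p K := by
  have := (EquicontinuousOn.tendsto_uniformOnFun_iff_pi' (𝔖 := {K}) (by simpa) (by simpa) p f).2
    (by rw [Set.sUnion_singleton, tendsto_pi_nhds]; exact fun x => h x x.2)
  exact UniformOnFun.tendsto_iff_tendstoUniformlyOn.1 this K rfl

lemma dist_integral_le_of_forall_dist_le {α : Type*} [MeasurableSpace α] (ρ : Measure α)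
    [IsFiniteMeasure ρ] {f g : α → ℝ} (hf : Integrable f ρ) (hg : Integrable g ρ) {ε : ℝ}
    (h : ∀ y, dist (f y) (g y) ≤ ε) :
    dist (∫ y, f y ∂ρ) (∫ y, g y ∂ρ) ≤ ε * ρ.real Set.univ := by
  rw [dist_eq_norm, ← integral_sub hf hg]
  exact norm_integral_le_of_norm_le_const (.of_forall fun y => by rw [← dist_eq_norm]; exact h y)

section KernelIntegral

variable {X : Type*} [MetricSpace X] {G : X → X → ℝ}

lemma hasCompactSupport_apply_of_uncurry (hG : HasCompactSupport (Function.uncurry G)) (x : X) :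
    HasCompactSupport (G x) :=
  .of_support_subset_isCompact (hG.image continuous_snd) fun y hy =>
    ⟨(x, y), subset_tsupport _ hy, rfl⟩

variable [MeasurableSpace X]

lemma integral_right_eq_zero_of_notMem {x : X} (hx : x ∉ Prod.fst '' tsupport (Function.uncurry G))
    (ρ : Measure X) : ∫ y, G x y ∂ρ = 0 :=
  integral_eq_zero_of_ae (.of_forall fun y =>
    image_eq_zero_of_notMem_tsupport (f := Function.uncurry G) (x := (x, y))
      fun h => hx ⟨(x, y), h, rfl⟩)

lemma hasCompactSupport_integral_right (hG : HasCompactSupport (Function.uncurry G))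
    (ρ : Measure X) : HasCompactSupport fun x => ∫ y, G x y ∂ρ :=
  .of_support_subset_isCompact (hG.image continuous_fst) fun _ hx =>
    by_contra fun hK => hx (integral_right_eq_zero_of_notMem hK ρ)

variable [BorelSpace X]
variable (hGc : Continuous (Function.uncurry G)) (hG : HasCompactSupport (Function.uncurry G))
include hGc hG

lemma continuous_integral_right (ρ : Measure X) [IsFiniteMeasure ρ] :
    Continuous fun x => ∫ y, G x y ∂ρ := by
  obtain ⟨B, hB⟩ := hGc.bounded_above_of_compact_support hG
  exact continuous_of_dominated (fun x => (hGc.comp (.prodMk_right x)).aestronglyMeasurable)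
    (fun x => .of_forall fun y => hB (x, y)) (integrable_const B)
    (.of_forall fun y => hGc.comp (continuous_id.prodMk continuous_const))

lemma integrable_apply_of_uncurry (ρ : Measure X) [IsFiniteMeasure ρ] (x : X) :
    Integrable (G x) ρ :=
  (hGc.comp (.prodMk_right x)).integrable_of_hasCompactSupport
    (hasCompactSupport_apply_of_uncurry hG x)

lemma integrable_integral_right (ρ ρ' : Measure X) [IsFiniteMeasure ρ] [IsFiniteMeasure ρ'] :
    Integrable (fun x => ∫ y, G x y ∂ρ) ρ' :=
  (continuous_integral_right hGc hG ρ).integrable_of_hasCompactSupport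
    (hasCompactSupport_integral_right hG ρ)

lemma lintegral_lintegral_ofReal_eq (hG0 : ∀ x y, 0 ≤ G x y) (ρ : Measure X) [IsFiniteMeasure ρ] :
    ∫⁻ x, ∫⁻ y, ENNReal.ofReal (G x y) ∂ρ ∂ρ = ENNReal.ofReal (∫ x, ∫ y, G x y ∂ρ ∂ρ) := by
  rw [ofReal_integral_eq_lintegral_ofReal (integrable_integral_right hGc hG ρ ρ)
    (.of_forall fun x => integral_nonneg (hG0 x))]
  refine lintegral_congr fun x => ?_
  rw [ofReal_integral_eq_lintegral_ofReal (integrable_apply_of_uncurry hGc hG ρ x)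
    (.of_forall (hG0 x))]

lemma uniformEquicontinuous_integral_right {ι : Type*} (ν : ι → Measure X)
    [∀ i, IsFiniteMeasure (ν i)] {C : ℝ} (hC : ∀ i, (ν i).real Set.univ ≤ C) :
    UniformEquicontinuous fun i x => ∫ y, G x y ∂ν i := by
  rw [Metric.uniformEquicontinuous_iff]
  intro ε hε
  obtain ⟨δ, hδ, hGδ⟩ := Metric.uniformContinuous_iff.1
    (hG.uniformContinuous_of_continuous hGc) (ε / (|C| + 1)) (by positivity)
  refine ⟨δ, hδ, fun x x' hxx' i => ?_⟩
  have hG_close : ∀ y, dist (G x y) (G x' y) ≤ ε / (|C| + 1) := fun y =>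
    (hGδ (a := (x, y)) (b := (x', y)) (by simpa [Prod.dist_eq] using hxx')).le
  calc dist (∫ y, G x y ∂ν i) (∫ y, G x' y ∂ν i)
      ≤ ε / (|C| + 1) * (ν i).real Set.univ := dist_integral_le_of_forall_dist_le _
        (integrable_apply_of_uncurry hGc hG _ x) (integrable_apply_of_uncurry hGc hG _ x') hG_close
    _ ≤ ε / (|C| + 1) * |C| := by gcongr; exact (hC i).trans (le_abs_self C)
    _ < ε := by
      rw [div_mul_eq_mul_div, div_lt_iff₀ (by positivity)]
      nlinarith [abs_nonneg C]

lemma tendstoUniformly_integral_right {ν : ℕ → Measure X} {μ : Measure X}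
    [∀ j, IsFiniteMeasure (ν j)] [IsFiniteMeasure μ] {C : ℝ} (hC : ∀ j, (ν j).real Set.univ ≤ C)
    (hw : ∀ f : X → ℝ, Continuous f → HasCompactSupport f →
      Tendsto (fun j => ∫ x, f x ∂ν j) atTop (𝓝 (∫ x, f x ∂μ))) :
    TendstoUniformly (fun j x => ∫ y, G x y ∂ν j) (fun x => ∫ y, G x y ∂μ) atTop := by
  set K := Prod.fst '' tsupport (Function.uncurry G)
  have hK : TendstoUniformlyOn (fun j x => ∫ y, G x y ∂ν j) (fun x => ∫ y, G x y ∂μ) atTop K :=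
    (uniformEquicontinuous_integral_right hGc hG ν hC).equicontinuous.equicontinuousOn K
      |>.tendstoUniformlyOn_of_tendsto (hG.image continuous_fst) fun x _ =>
        hw _ (hGc.comp (.prodMk_right x)) (hasCompactSupport_apply_of_uncurry hG x)
  rw [Metric.tendstoUniformly_iff]
  intro η hη
  filter_upwards [Metric.tendstoUniformlyOn_iff.1 hK η hη] with j hj x
  by_cases hx : x ∈ K
  · exact hj x hx
  · simpa [integral_right_eq_zero_of_notMem hx] using hη

lemma tendsto_integral_integral_of_tendsto_integral {ν : ℕ → Measure X} {μ : Measure X}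
    [∀ j, IsFiniteMeasure (ν j)] [IsFiniteMeasure μ] {C : ℝ} (hC : ∀ j, (ν j).real Set.univ ≤ C)
    (hw : ∀ f : X → ℝ, Continuous f → HasCompactSupport f →
      Tendsto (fun j => ∫ x, f x ∂ν j) atTop (𝓝 (∫ x, f x ∂μ))) :
    Tendsto (fun j => ∫ x, ∫ y, G x y ∂ν j ∂ν j) atTop (𝓝 (∫ x, ∫ y, G x y ∂μ ∂μ)) := by
  rw [Metric.tendsto_nhds]
  intro ε hε
  have hunif := Metric.tendstoUniformly_iff.1
    (tendstoUniformly_integral_right hGc hG hC hw) (ε / 2 / (|C| + 1)) (by positivity)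
  have hlim := Metric.tendsto_nhds.1 (hw _ (continuous_integral_right hGc hG μ)
    (hasCompactSupport_integral_right hG μ)) (ε / 2) (by positivity)
  filter_upwards [hunif, hlim] with j hj hj'
  have hclose : dist (∫ x, ∫ y, G x y ∂ν j ∂ν j) (∫ x, ∫ y, G x y ∂μ ∂ν j) ≤ ε / 2 := by
    calc _ ≤ ε / 2 / (|C| + 1) * (ν j).real Set.univ :=
          dist_integral_le_of_forall_dist_le _ (integrable_integral_right hGc hG _ _)
            (integrable_integral_right hGc hG _ _) fun x => by rw [dist_comm]; exact (hj x).le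
      _ ≤ ε / 2 / (|C| + 1) * |C| := by gcongr; exact (hC j).trans (le_abs_self C)
      _ ≤ ε / 2 := by
        rw [div_mul_eq_mul_div, div_le_iff₀ (by positivity)]
        nlinarith [abs_nonneg C]
  calc _ ≤ _ := dist_triangle _ (∫ x, ∫ y, G x y ∂μ ∂ν j) _
    _ < ε / 2 + ε / 2 := add_lt_add_of_le_of_lt hclose hj'
    _ = ε := add_halves ε

end KernelIntegral

def truncEnergy (n : ℕ) (ρ : Measure E3) : ℝ := ∫ x, ∫ y, cutoffCoulomb n x y ∂ρ ∂ρ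

lemma truncEnergy_nonneg (n : ℕ) (ρ : Measure E3) : 0 ≤ truncEnergy n ρ :=
  integral_nonneg fun x => integral_nonneg fun y => cutoffCoulomb_nonneg n x y

lemma ofReal_truncEnergy (n : ℕ) (ρ : Measure E3) [IsFiniteMeasure ρ] :
    ENNReal.ofReal (truncEnergy n ρ) = ∫⁻ x, ∫⁻ y, ENNReal.ofReal (cutoffCoulomb n x y) ∂ρ ∂ρ :=
  (lintegral_lintegral_ofReal_eq (continuous_cutoffCoulomb n) (hasCompactSupport_cutoffCoulomb n)
    (cutoffCoulomb_nonneg n) ρ).symm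

lemma coulombPair_le_iSup_truncEnergy (μ : Measure E3) [IsFiniteMeasure μ] :
    coulombPair μ μ ≤ ⨆ n, ENNReal.ofReal (truncEnergy n μ) := by
  have hmono : ∀ x y : E3, Monotone fun n => ENNReal.ofReal (cutoffCoulomb n x y) :=
    fun x y _ _ hab => ENNReal.ofReal_le_ofReal (monotone_cutoffCoulomb x y hab)
  calc coulombPair μ μ ≤ ∫⁻ x, ∫⁻ y, ⨆ n, ENNReal.ofReal (cutoffCoulomb n x y) ∂μ ∂μ :=
        lintegral_mono fun x => lintegral_mono fun y => ofReal_inv_dist_le_iSup_cutoffCoulomb x y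
    _ = ∫⁻ x, ⨆ n, ∫⁻ y, ENNReal.ofReal (cutoffCoulomb n x y) ∂μ ∂μ :=
        lintegral_congr fun x => lintegral_iSup
          (fun n => ((continuous_cutoffCoulomb (E := E3) n).comp
            (.prodMk_right x)).measurable.ennreal_ofReal)
          fun _ _ hab y => hmono x y hab
    _ = ⨆ n, ∫⁻ x, ∫⁻ y, ENNReal.ofReal (cutoffCoulomb n x y) ∂μ ∂μ :=
        lintegral_iSup (fun n => (continuous_cutoffCoulomb (E := E3) n).measurable.ennreal_ofReal
          |>.lintegral_prod_right')
          fun _ _ hab x => lintegral_mono fun y => hmono x y hab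
    _ = ⨆ n, ENNReal.ofReal (truncEnergy n μ) := by simp_rw [ofReal_truncEnergy]

lemma selfEnergy_le_iSup_truncEnergy (μ : Measure E3) [IsFiniteMeasure μ] :
    selfEnergy μ ≤ ⨆ n, ENNReal.ofReal (truncEnergy n μ / 2) := by
  calc selfEnergy μ ≤ 1 / 2 * ⨆ n, ENNReal.ofReal (truncEnergy n μ) :=
        mul_le_mul_right (coulombPair_le_iSup_truncEnergy μ) _
    _ = ⨆ n, ENNReal.ofReal (truncEnergy n μ / 2) := by
        rw [ENNReal.mul_iSup]
        refine iSup_congr fun n => ?_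
        rw [div_eq_inv_mul, ENNReal.ofReal_mul (by norm_num), one_div, ENNReal.ofReal_inv_of_pos
          two_pos, ENNReal.ofReal_ofNat]

/-- On the diagonal the Coulomb kernel is `(0 : ℝ)⁻¹ = 0` while `cutoffCoulomb n` is at most
`n + 1`: the atoms are paid for separately. -/
lemma ofReal_truncEnergy_le (n : ℕ) (ρ : Measure E3) [IsFiniteMeasure ρ] :
    ENNReal.ofReal (truncEnergy n ρ) ≤ coulombPair ρ ρ + (n + 1) * ∫⁻ x, ρ {x} ∂ρ := by
  have hinner : ∀ x, ∫⁻ y, ENNReal.ofReal (cutoffCoulomb n x y) ∂ρ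
      ≤ ∫⁻ y, ENNReal.ofReal (dist x y)⁻¹ ∂ρ + (n + 1) * ρ {x} := fun x => by
    calc _ ≤ ∫⁻ y, (ENNReal.ofReal (dist x y)⁻¹ +
          Set.indicator {x} (fun _ => (n : ℝ≥0∞) + 1) y) ∂ρ :=
          lintegral_mono fun y => ofReal_cutoffCoulomb_le n x y
      _ = _ := by
          rw [lintegral_add_left (by fun_prop), lintegral_indicator (measurableSet_singleton x),
            setLIntegral_const]
  rw [ofReal_truncEnergy, coulombPair]
  calc _ ≤ ∫⁻ x, (∫⁻ y, ENNReal.ofReal (dist x y)⁻¹ ∂ρ + (n + 1) * ρ {x}) ∂ρ :=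
        lintegral_mono hinner
    _ = _ := by
        have hmeas : Measurable fun p : E3 × E3 => ENNReal.ofReal (dist p.1 p.2)⁻¹ :=
          measurable_dist.inv.ennreal_ofReal
        rw [lintegral_add_left hmeas.lintegral_prod_right',
          lintegral_const_mul' _ _ (by simp)]

section Empirical

variable {Z : ℝ} {N : ℕ} {x : Fin N → E3}

lemma lintegral_empirical (f : E3 → ℝ≥0∞) :
    ∫⁻ y, f y ∂(empirical Z N x) = (ENNReal.ofReal Z)⁻¹ * ∑ i, f (x i) := by
  simp [empirical, lintegral_smul_measure]

lemma empirical_apply_univ (hZ : 0 < Z) :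
    empirical Z N x Set.univ = ENNReal.ofReal (N / Z) := by
  rw [← lintegral_one, lintegral_empirical, ENNReal.ofReal_div_of_pos hZ, ENNReal.div_eq_inv_mul]
  simp

lemma empirical_apply_singleton (hx : Function.Injective x) (i : Fin N) :
    empirical Z N x {x i} = (ENNReal.ofReal Z)⁻¹ := by
  simp [empirical, Set.indicator_apply, hx.eq_iff]

lemma isFiniteMeasure_empirical (hZ : 0 < Z) : IsFiniteMeasure (empirical Z N x) :=
  ⟨by rw [empirical_apply_univ hZ]; exact ENNReal.ofReal_lt_top⟩

lemma lintegral_empirical_apply_singleton (hZ : 0 < Z) (hx : Function.Injective x) :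
    ∫⁻ y, empirical Z N x {y} ∂(empirical Z N x) = ENNReal.ofReal (N / Z / Z) := by
  simp only [lintegral_empirical, empirical_apply_singleton hx, Finset.sum_const,
    Finset.card_univ, Fintype.card_fin, nsmul_eq_mul]
  rw [← ENNReal.ofReal_inv_of_pos hZ, ← ENNReal.ofReal_natCast,
    ← ENNReal.ofReal_mul (by positivity),
    ← ENNReal.ofReal_mul (by positivity)]
  congr 1
  field_simp

lemma truncEnergy_empirical_le (hZ : 0 < Z) (hx : Function.Injective x) (n : ℕ) :
    (((truncEnergy n (empirical Z N x) - (n + 1) * (N / Z / Z)) / 2 : ℝ) : EReal) ≤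
      selfEnergy (empirical Z N x) := by
  set ρ := empirical Z N x
  have := isFiniteMeasure_empirical (x := x) hZ
  have hcoulomb : ENNReal.ofReal (truncEnergy n ρ - (n + 1) * (N / Z / Z)) ≤ coulombPair ρ ρ := by
    rw [ENNReal.ofReal_sub _ (by positivity), tsub_le_iff_right]
    convert ofReal_truncEnergy_le n ρ using 2
    rw [lintegral_empirical_apply_singleton hZ hx, ENNReal.ofReal_mul (by positivity)]
    norm_cast
  have hself : ENNReal.ofReal ((truncEnergy n ρ - (n + 1) * (N / Z / Z)) / 2) ≤ selfEnergy ρ := by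
    rw [selfEnergy, div_eq_inv_mul, ENNReal.ofReal_mul (by norm_num), one_div,
      ENNReal.ofReal_inv_of_pos two_pos, ENNReal.ofReal_ofNat]
    exact mul_le_mul_right hcoulomb _
  calc _ ≤ ((ENNReal.ofReal ((truncEnergy n ρ - (n + 1) * (N / Z / Z)) / 2) : EReal)) := by
        rw [EReal.coe_ennreal_ofReal]; exact EReal.coe_le_coe_iff.2 (le_max_left _ _)
    _ ≤ _ := EReal.coe_ennreal_le_coe_ennreal_iff.2 hself

end Empirical

/-- `(0 : ℝ)⁻¹ = 0` already removes the diagonal from the Coulomb kernel. -/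
lemma offDiagEnergy_eq_selfEnergy (μ : Measure E3) : offDiagEnergy μ = selfEnergy μ := by
  unfold offDiagEnergy selfEnergy coulombPair
  congr 1
  refine lintegral_congr fun x => lintegral_congr fun y => ?_
  split_ifs with h <;> simp [h]

section Discrete

variable {M N : ℕ} {R : Fin M → E3} {Zc : Fin M → ℝ} {d : ℝ} {μ : Measure E3}

lemma discEnergy_eq_top (h : ∀ x, μ ≠ empirical (∑ α, Zc α) N x) :
    discEnergy M N R Zc d μ = ⊤ :=
  if_neg fun ⟨x, _, _, hx⟩ => h x hx

lemma discEnergy_eq_of_empirical {x : Fin N → E3} (hx : Function.Injective x)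
    (hxd : ∀ i, x i ∈ hardCoreComp M R d) (hμ : μ = empirical (∑ α, Zc α) N x) :
    discEnergy M N R Zc d μ =
      selfEnergy μ - attraction M R (fun α => Zc α / ∑ β, Zc β) μ := by
  rw [discEnergy, if_pos ⟨x, hx, hxd, hμ⟩, offDiagEnergy_eq_selfEnergy]

end Discrete

/-- Agrees with `|x - c|⁻¹` outside the hard core `ball c d`. -/
def nucleusPot {X : Type*} [MetricSpace X] [ProperSpace X] {d : ℝ} (hd : 0 < d) (c : X) :
    ZeroAtInftyContinuousMap X ℝ where
  toFun x := (max d (dist x c))⁻¹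
  continuous_toFun := (continuous_const.max (continuous_id.dist continuous_const)).inv₀
    fun _ => (lt_max_of_lt_left hd).ne'
  zero_at_infty' := tendsto_inv_atTop_zero.comp <|
    tendsto_atTop_mono (fun _ => le_max_right _ _) (tendsto_dist_right_cocompact_atTop c)

section Attraction

variable {M : ℕ} {R : Fin M → E3} {d : ℝ}

lemma attraction_eq_sum (hd : 0 < d) (w : Fin M → ℝ) (μ : Measure E3) [IsFiniteMeasure μ]
    (hμ : μ (hardCoreComp M R d)ᶜ = 0) :
    attraction M R w μ = ∑ α, w α * ∫ x, nucleusPot hd (R α) x ∂μ := by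
  have hcore : ∀ᵐ x ∂μ, x ∈ hardCoreComp M R d := measure_eq_zero_iff_ae_notMem.1 hμ |>.mono
    fun _ h => not_not.1 h
  rw [attraction, integral_congr_ae (g := fun x => ∑ α, w α * nucleusPot hd (R α) x)
    (hcore.mono fun x hx => Finset.sum_congr rfl fun α _ => by
      simp [nucleusPot, max_eq_right (hx α), div_eq_mul_inv])]
  have hint : ∀ α, Integrable (fun x => w α * nucleusPot hd (R α) x) μ := fun α =>
    ((nucleusPot hd (R α)).toBCF.integrable μ).const_mul (w α)
  rw [integral_finsetSum _ fun α _ => hint α]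
  simp_rw [integral_const_mul]

lemma tendsto_attraction (hd : 0 < d) {w : ℕ → Fin M → ℝ} {z : Fin M → ℝ}
    (hw : ∀ α, Tendsto (fun j => w j α) atTop (𝓝 (z α)))
    {μs : ℕ → Measure E3} {μ : Measure E3} [∀ j, IsFiniteMeasure (μs j)] [IsFiniteMeasure μ]
    (hsupp : ∀ j, μs j (hardCoreComp M R d)ᶜ = 0) (hμsupp : μ (hardCoreComp M R d)ᶜ = 0)
    (hconv : weakStarTendsto μs μ) :
    Tendsto (fun j => attraction M R (w j) (μs j)) atTop (𝓝 (attraction M R z μ)) := by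
  simp_rw [attraction_eq_sum hd _ _ (hsupp _), attraction_eq_sum hd _ _ hμsupp]
  exact tendsto_finsetSum _ fun α _ => (hw α).mul (hconv _)

end Attraction

section Mass

variable {E : Type*} [NormedAddCommGroup E] [MeasurableSpace E] [OpensMeasurableSpace E]

lemma iSup_lintegral_cutoff (μ : Measure E) :
    ⨆ m : ℕ, ∫⁻ x, ENNReal.ofReal (cutoff m x) ∂μ = μ Set.univ := by
  rw [← lintegral_iSup (fun m => (continuous_cutoff m).measurable.ennreal_ofReal)
    fun _ _ hab x => ENNReal.ofReal_le_ofReal (monotone_cutoff x hab)]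
  simp [iSup_ofReal_cutoff]

variable [ProperSpace E]

lemma integrable_cutoff (m : ℕ) (μ : Measure E) [IsFiniteMeasure μ] : Integrable (cutoff m) μ :=
  (continuous_cutoff m).integrable_of_hasCompactSupport (hasCompactSupport_cutoff m)

lemma exists_lt_integral_cutoff (μ : Measure E) [IsFiniteMeasure μ] {c : ℝ}
    (h : ENNReal.ofReal c < μ Set.univ) : ∃ m : ℕ, c < ∫ x, cutoff m x ∂μ := by
  rw [← iSup_lintegral_cutoff, lt_iSup_iff] at h
  obtain ⟨m, hm⟩ := h
  rw [← ofReal_integral_eq_lintegral_ofReal (integrable_cutoff m μ)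
    (.of_forall (cutoff_nonneg m))] at hm
  exact ⟨m, (ENNReal.ofReal_lt_ofReal_iff'.1 hm).1⟩

lemma integral_cutoff_le (m : ℕ) (μ : Measure E) [IsFiniteMeasure μ] :
    ∫ x, cutoff m x ∂μ ≤ μ.real Set.univ := by
  simpa using integral_mono (integrable_cutoff m μ) (integrable_const 1) (cutoff_le_one m)

end Mass

section WeakStar

variable {μs : ℕ → Measure E3} {μ : Measure E3}

lemma weakStarTendsto.tendsto_integral (h : weakStarTendsto μs μ) {f : E3 → ℝ}
    (hf : Continuous f) (hfs : HasCompactSupport f) :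
    Tendsto (fun j => ∫ x, f x ∂μs j) atTop (𝓝 (∫ x, f x ∂μ)) :=
  h ⟨⟨f, hf⟩, hfs.is_zero_at_infty⟩

lemma weakStarTendsto.ite_measure_univ_le (h : weakStarTendsto μs μ) (c : ℝ≥0∞) :
    weakStarTendsto (fun j => if μs j Set.univ ≤ c then μs j else μ) μ := fun f => by
  rw [tendsto_iff_dist_tendsto_zero]
  refine squeeze_zero (fun _ => dist_nonneg) (fun j => ?_) (tendsto_iff_dist_tendsto_zero.1 (h f))
  dsimp only
  split_ifs <;> simp

/-- Replacing the measures of mass above `c` by the limit yields uniformly bounded masses, which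
is what the convergence of the double integrals needs. -/
lemma tendsto_truncEnergy_ite [IsFiniteMeasure μ] (h : weakStarTendsto μs μ) {c : ℝ≥0∞}
    (hc : c ≠ ⊤) (n : ℕ) :
    Tendsto (fun j => truncEnergy n (if μs j Set.univ ≤ c then μs j else μ)) atTop
      (𝓝 (truncEnergy n μ)) := by
  set ν := fun j => if μs j Set.univ ≤ c then μs j else μ
  have hν : ∀ j, IsFiniteMeasure (ν j) ∧ (ν j).real Set.univ ≤ max c.toReal (μ.real Set.univ) :=
    fun j => by
      by_cases hj : μs j Set.univ ≤ c
      · simp only [ν, if_pos hj]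
        exact ⟨⟨hj.trans_lt hc.lt_top⟩, le_max_of_le_left (ENNReal.toReal_mono hc hj)⟩
      · simp only [ν, if_neg hj]
        exact ⟨inferInstance, le_max_right _ _⟩
  have := fun j => (hν j).1
  exact tendsto_integral_integral_of_tendsto_integral (continuous_cutoffCoulomb n)
    (hasCompactSupport_cutoffCoulomb n) (fun j => (hν j).2)
    fun f hf hfs => (h.ite_measure_univ_le c).tendsto_integral hf hfs

lemma eventually_ne_empirical_of_lt_measure_univ [∀ j, IsFiniteMeasure (μs j)] [IsFiniteMeasure μ]
    (hconv : weakStarTendsto μs μ) {N : ℕ → ℕ} {Z : ℕ → ℝ} (hZ : ∀ᶠ j in atTop, 0 < Z j)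
    {lam : ℝ} (hNZ : Tendsto (fun j => (N j : ℝ) / Z j) atTop (𝓝 lam))
    (hμ : ENNReal.ofReal lam < μ Set.univ) :
    ∀ᶠ j in atTop, ∀ x : Fin (N j) → E3, μs j ≠ empirical (Z j) (N j) x := by
  obtain ⟨m, hm⟩ := exists_lt_integral_cutoff μ hμ
  filter_upwards [hZ, hNZ.eventually_lt (hconv.tendsto_integral (continuous_cutoff m)
    (hasCompactSupport_cutoff m)) hm] with j hZj hlt x hx
  have hmass : (μs j).real Set.univ = N j / Z j := by
    rw [measureReal_def, hx, empirical_apply_univ hZj, ENNReal.toReal_ofReal (by positivity)]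
  linarith [integral_cutoff_le m (μs j)]

end WeakStar

section LowerBound

variable {M : ℕ} {R : Fin M → E3} {d : ℝ} {z : Fin M → ℝ} {N : ℕ → ℕ} {Zc : ℕ → Fin M → ℝ}
  {lam : ℝ} {μs : ℕ → Measure E3} {μ : Measure E3} [∀ j, IsFiniteMeasure (μs j)]
  [IsFiniteMeasure μ]
  (hd : 0 < d) (hZ : Tendsto (fun j => ∑ α, Zc j α) atTop atTop)
  (hNZ : Tendsto (fun j => (N j : ℝ) / ∑ α, Zc j α) atTop (𝓝 lam))
  (hzlim : ∀ α, Tendsto (fun j => Zc j α / ∑ β, Zc j β) atTop (𝓝 (z α)))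
  (hsupp : ∀ j, μs j (hardCoreComp M R d)ᶜ = 0) (hμsupp : μ (hardCoreComp M R d)ᶜ = 0)
  (hconv : weakStarTendsto μs μ)
include hd hZ hNZ hzlim hsupp hμsupp hconv

lemma truncEnergy_sub_attraction_le_liminf (n : ℕ) :
    ((truncEnergy n μ / 2 - attraction M R z μ : ℝ) : EReal) ≤
      liminf (fun j => discEnergy M (N j) R (Zc j) d (μs j)) atTop := by
  set Z := fun j => ∑ α, Zc j α
  set ν := fun j => if μs j Set.univ ≤ ENNReal.ofReal (lam + 1) then μs j else μ
  set a := fun j => (truncEnergy n (ν j) - (n + 1) * (N j / Z j / Z j)) / 2 -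
    attraction M R (fun α => Zc j α / Z j) (μs j)
  have hdiag : Tendsto (fun j => ((n : ℝ) + 1) * (N j / Z j / Z j)) atTop (𝓝 0) := by
    simpa [Z, div_eq_mul_inv] using
      (hNZ.mul (tendsto_inv_atTop_zero.comp hZ)).const_mul ((n : ℝ) + 1)
  have ha : Tendsto a atTop (𝓝 (truncEnergy n μ / 2 - attraction M R z μ)) := by
    simpa using
      ((((tendsto_truncEnergy_ite hconv ENNReal.ofReal_ne_top n).sub hdiag).div_const 2).sub
      (tendsto_attraction hd hzlim hsupp hμsupp hconv))
  have hle : ∀ᶠ j in atTop, (a j : EReal) ≤ discEnergy M (N j) R (Zc j) d (μs j) := by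
    filter_upwards [hZ.eventually_gt_atTop 0, hNZ.eventually (ge_mem_nhds (lt_add_one lam))]
      with j hZj hmass
    by_cases hemp : ∃ x : Fin (N j) → E3, Function.Injective x ∧
        (∀ i, x i ∈ hardCoreComp M R d) ∧ μs j = empirical (Z j) (N j) x
    · obtain ⟨x, hx, hxd, hμx⟩ := hemp
      have hνj : ν j = μs j := if_pos (by
        rw [hμx, empirical_apply_univ hZj]; exact ENNReal.ofReal_le_ofReal hmass)
      rw [discEnergy_eq_of_empirical hx hxd hμx, EReal.coe_sub, hνj]
      exact EReal.sub_le_sub (hμx ▸ truncEnergy_empirical_le hZj hx n) le_rfl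
    · rw [discEnergy, if_neg hemp]
      exact le_top
  calc _ = liminf (fun j => (a j : EReal)) atTop :=
        ((continuous_coe_real_ereal.tendsto _).comp ha).liminf_eq.symm
    _ ≤ _ := liminf_le_liminf hle

lemma contEnergy_le_liminf_discEnergy :
    contEnergy M R z μ ≤ liminf (fun j => discEnergy M (N j) R (Zc j) d (μs j)) atTop := by
  refine EReal.sub_le_of_le_add ?_
  calc (selfEnergy μ : EReal) ≤ ((⨆ n, ENNReal.ofReal (truncEnergy n μ / 2) : ℝ≥0∞) : EReal) :=
        EReal.coe_ennreal_le_coe_ennreal_iff.2 (selfEnergy_le_iSup_truncEnergy μ)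
    _ = ⨆ n, ((truncEnergy n μ / 2 : ℝ) : EReal) := by
        rw [Monotone.map_ciSup_of_continuousAt continuous_coe_ennreal_ereal.continuousAt
          fun _ _ h => EReal.coe_ennreal_le_coe_ennreal_iff.2 h]
        simp_rw [EReal.coe_ennreal_ofReal,
          max_eq_left (div_nonneg (truncEnergy_nonneg _ μ) zero_le_two)]
    _ ≤ _ := iSup_le fun n => (EReal.sub_le_iff_le_add (.inl (EReal.coe_ne_bot _))
        (.inl (EReal.coe_ne_top _))).1 (by
          rw [← EReal.coe_sub]
          exact truncEnergy_sub_attraction_le_liminf hd hZ hNZ hzlim hsupp hμsupp hconv n)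

end LowerBound

theorem gamma_lower_bound_general
    (M : ℕ) (R : Fin M → E3)
    (d : ℝ) (hd : 0 < d)
    (z : Fin M → ℝ)
    (N : ℕ → ℕ)
    (Zc : ℕ → Fin M → ℝ)
    (hZ : Tendsto (fun j => ∑ α, Zc j α) atTop atTop)
    (lam : ℝ)
    (hNZ : Tendsto (fun j => (N j : ℝ) / ∑ α, Zc j α) atTop (𝓝 lam))
    (hzlim : ∀ α, Tendsto (fun j => Zc j α / ∑ β, Zc j β) atTop (𝓝 (z α)))
    (μs : ℕ → Measure E3) (μ : Measure E3)
    (hfin : ∀ j, IsFiniteMeasure (μs j)) (hμfin : IsFiniteMeasure μ)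
    (hsupp : ∀ j, μs j (hardCoreComp M R d)ᶜ = 0)
    (hμsupp : μ (hardCoreComp M R d)ᶜ = 0)
    (hconv : weakStarTendsto μs μ) :
    (if μ Set.univ ≤ ENNReal.ofReal lam then contEnergy M R z μ else (⊤ : EReal))
      ≤ Filter.liminf (fun j => discEnergy M (N j) R (Zc j) d (μs j)) atTop := by
  split_ifs with hmass
  · exact contEnergy_le_liminf_discEnergy hd hZ hNZ hzlim hsupp hμsupp hconv
  · have htop : ∀ᶠ j in atTop, discEnergy M (N j) R (Zc j) d (μs j) = ⊤ :=
      (eventually_ne_empirical_of_lt_measure_univ hconv (hZ.eventually_gt_atTop 0) hNZ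
        (not_le.1 hmass)).mono fun _ hj => discEnergy_eq_top hj
    rw [liminf_congr htop, liminf_const]

/-- Gamma-convergence, lower bound: if `μ_j ⇀* μ` then
`I_λ(μ) ≤ liminf_j I^{(j)}(μ_j)`, where `I^{(j)}` is the rescaled discrete
energy and `I_λ(μ) = I(μ)` if `μ(ℝ³∖Ω) ≤ λ`, `+∞` otherwise. -/
theorem gamma_lower_bound
    (M : ℕ) (hM : 1 ≤ M) (R : Fin M → E3) (hR : Function.Injective R)
    (d : ℝ) (hd : 0 < d)
    (hsep : ∀ α β, α ≠ β → 2 * d < dist (R α) (R β))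
    (z : Fin M → ℝ) (hz0 : ∀ α, 0 ≤ z α)
    (N : ℕ → ℕ) (hN : Tendsto N atTop atTop)
    (Zc : ℕ → Fin M → ℝ) (hZc : ∀ j α, 0 < Zc j α)
    (hZ : Tendsto (fun j => ∑ α, Zc j α) atTop atTop)
    (lam : ℝ) (hlam : 0 < lam)
    (hNZ : Tendsto (fun j => (N j : ℝ) / ∑ α, Zc j α) atTop (𝓝 lam))
    (hzlim : ∀ α, Tendsto (fun j => Zc j α / ∑ β, Zc j β) atTop (𝓝 (z α)))
    (μs : ℕ → Measure E3) (μ : Measure E3)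
    (hfin : ∀ j, IsFiniteMeasure (μs j)) (hμfin : IsFiniteMeasure μ)
    (hsupp : ∀ j, μs j (hardCoreComp M R d)ᶜ = 0)
    (hμsupp : μ (hardCoreComp M R d)ᶜ = 0)
    (hconv : weakStarTendsto μs μ) :
    (if μ Set.univ ≤ ENNReal.ofReal lam then contEnergy M R z μ else (⊤ : EReal))
      ≤ Filter.liminf (fun j => discEnergy M (N j) R (Zc j) d (μs j)) atTop :=
  gamma_lower_bound_general M R d hd z N Zc hZ lam hNZ hzlim μs μ hfin hμfin hsupp hμsupp hconv

end
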